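/- arXiv:1701.07092 — 2 statements merged into one kernel-verified Lean document; each statement's English description precedes it below -/
import Mathlib

section
/- Let $b,c$ be positive integers and define $T(i,j) := \sum_{s=1}^{\min\{i,j\}} A(b,c,i,s)\cdot C(b,c,s,j)$. Then for all positive integers $i,j$: $(c-i+j+1)\cdot T(i,j+1) + (j-i-b)\cdot T(i,j) = 0$. -/
/-- The binomial coefficient for integer arguments, over ℚ:
`n!/((n-k)! k!)` if `0 ≤ k ≤ n`, and `0` otherwise. -/
noncomputable def ibinom (n k : ℤ) : ℚ :=
  if 0 ≤ k ∧ k ≤ n then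
    (Nat.factorial n.toNat : ℚ) / (Nat.factorial (n - k).toNat * Nat.factorial k.toNat)
  else 0

/-- The entry `A(b,c,i,j)` of the lower-triangular factor. -/
noncomputable def Afun (b c i j : ℕ) : ℚ :=
  if j ≤ i ∧ i ≤ c + j then
    (Nat.factorial c * Nat.factorial (i - 1) * Nat.factorial (b + j - 1) : ℚ) /
      (Nat.factorial (j - 1) * Nat.factorial (b + i - 1) * Nat.factorial (i - j) *
        Nat.factorial (c + j - i))
  else 0

/-- The entry `C(b,c,i,j)` of the upper-triangular factor. -/
noncomputable def Cfun (b c i j : ℕ) : ℚ :=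
  if i ≤ j ∧ j ≤ b + i then
    (Nat.factorial b * Nat.factorial (j - 1) * Nat.factorial (b + c + i - 1) : ℚ) /
      (Nat.factorial (b + i - 1) * Nat.factorial (c + j - 1) * Nat.factorial (j - i) *
        Nat.factorial (b + i - j))
  else 0

/-- The entry `D(i)` (last column of the upper-triangular factor), in the
integer parameters `n, m`. -/
noncomputable def Dfun (b c : ℕ) (n m : ℤ) (i : ℕ) : ℚ :=
  ∑ v ∈ Finset.Icc 1 i, (-1 : ℚ) ^ (i - v) *
    ((Nat.factorial (i - 1) * Nat.factorial (b + v - 1) * Nat.factorial (c + i - v - 1) : ℚ) /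
      (Nat.factorial (c - 1) * Nat.factorial (v - 1) * Nat.factorial (b + i - 1) *
        Nat.factorial (i - v))) * ibinom n (m - v)

/-- The entry `B(j)` (last row of the lower-triangular factor), in the
integer parameters `n', m'`. -/
noncomputable def Bfun (b c : ℕ) (n' m' : ℤ) (j : ℕ) : ℚ :=
  ∑ v ∈ Finset.Icc 1 j, (-1 : ℚ) ^ (j - v) *
    ((Nat.factorial (b + j - 1) * Nat.factorial (c + v - 1) * Nat.factorial (b + j - v - 1) : ℚ) /
      (Nat.factorial (b - 1) * Nat.factorial (v - 1) * Nat.factorial (j - v) *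
        Nat.factorial (b + c + j - 1))) * ibinom n' (v - m')

/-- MacMahon's product formula for the number of rhombus tilings of the
semi-regular hexagon with side lengths `a, b, c`. -/
noncomputable def macmahon (a b c : ℕ) : ℚ :=
  ∏ i ∈ Finset.Icc 1 a, ∏ j ∈ Finset.Icc 1 b, ∏ k ∈ Finset.Icc 1 c,
    (((i : ℚ) + j + k - 1) / ((i : ℚ) + j + k - 2))

/-! Both `A(i,s) C(s,j)` and `A(i,s) C(s,j+1)` are polynomial multiples of one hypergeometric
term `F(s)` (`hypergeomTerm`), and Gosper's algorithm finds the antidifference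
`G(s) = (1 - s)(s + c - i)(s + b - j) F(s)` (`antidiff`) with
`(c-i+j+1) A(i,s) C(s,j+1) + (j-i-b) A(i,s) C(s,j) = G(s+1) - G(s)`.
Summed over `1 ≤ s ≤ i` this telescopes to `G(i+1) - G(1) = 0`.
Factorials of differences are written as reciprocal factorials that vanish on negative
integers, so that the identities hold without case distinctions on the supports. -/

open Nat

noncomputable def invFactorial (n : ℤ) : ℚ :=
  if 0 ≤ n then ((n.toNat)! : ℚ)⁻¹ else 0

@[simp]
lemma invFactorial_natCast (n : ℕ) : invFactorial n = ((n ! : ℕ) : ℚ)⁻¹ := by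
  simp [invFactorial]

lemma invFactorial_of_neg {n : ℤ} (h : n < 0) : invFactorial n = 0 :=
  if_neg (by omega)

lemma invFactorial_eq_mul_of_add_one_eq {m n : ℤ} (h : m + 1 = n) :
    invFactorial m = n * invFactorial n := by
  subst h
  rcases lt_trichotomy m (-1) with hm | rfl | hm
  · rw [invFactorial_of_neg (by omega), invFactorial_of_neg (by omega), mul_zero]
  · simp [invFactorial_of_neg]
  · lift m to ℕ using (by omega)
    rw [← Nat.cast_one, ← Nat.cast_add, invFactorial_natCast, invFactorial_natCast,
      Nat.factorial_succ]
    push_cast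
    field_simp

lemma Afun_eq_mul_invFactorial (b c i s : ℕ) :
    Afun b c i s = c ! * (i - 1)! * (b + s - 1)! / ((s - 1)! * (b + i - 1)!) *
      invFactorial (i - s) * invFactorial (c + s - i) := by
  unfold Afun
  split_ifs with h
  · rw [show (i : ℤ) - s = (i - s : ℕ) by omega,
      show (c + s - i : ℤ) = (c + s - i : ℕ) by omega,
      invFactorial_natCast, invFactorial_natCast, add_comm c s]
    field_simp
  · rcases not_and_or.1 h with h | h
    · rw [invFactorial_of_neg (by omega), mul_zero, zero_mul]
    · rw [invFactorial_of_neg (n := (c + s - i : ℤ)) (by omega), mul_zero]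

lemma Cfun_eq_mul_invFactorial (b c s j : ℕ) :
    Cfun b c s j = b ! * (j - 1)! * (b + c + s - 1)! / ((b + s - 1)! * (c + j - 1)!) *
      invFactorial (j - s) * invFactorial (b + s - j) := by
  unfold Cfun
  split_ifs with h
  · rw [show (j : ℤ) - s = (j - s : ℕ) by omega,
      show (b + s - j : ℤ) = (b + s - j : ℕ) by omega,
      invFactorial_natCast, invFactorial_natCast]
    field_simp
  · rcases not_and_or.1 h with h | h
    · rw [invFactorial_of_neg (by omega), mul_zero, zero_mul]
    · rw [invFactorial_of_neg (n := (b + s - j : ℤ)) (by omega), mul_zero]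

lemma sum_Icc_min_Afun_mul_Cfun (b c i j : ℕ) :
    ∑ s ∈ Finset.Icc 1 (min i j), Afun b c i s * Cfun b c s j =
      ∑ s ∈ Finset.Icc 1 i, Afun b c i s * Cfun b c s j := by
  refine Finset.sum_subset (Finset.Icc_subset_Icc_right (min_le_left i j)) fun s hs hs' => ?_
  simp only [Finset.mem_Icc] at hs hs'
  rw [Cfun, if_neg (by omega), mul_zero]

noncomputable def hypergeomTerm (b c i j s : ℕ) : ℚ :=
  b ! * c ! * (i - 1)! * (j - 1)! / ((b + i - 1)! * (c + j)!) * s.ascFactorial (b + c) *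
    invFactorial (i - s) * invFactorial (c + s - i) * invFactorial (j + 1 - s) *
    invFactorial (b + s - j)

lemma hypergeomTerm_of_lt {b c i j s : ℕ} (h : i < s) : hypergeomTerm b c i j s = 0 := by
  rw [hypergeomTerm, invFactorial_of_neg (by omega)]
  simp

lemma hypergeomTerm_succ (b c i j s : ℕ) :
    s * ((c : ℚ) + s + 1 - i) * ((b : ℚ) + s + 1 - j) * hypergeomTerm b c i j (s + 1) =
      ((b : ℚ) + c + s) * ((i : ℚ) - s) * ((j : ℚ) + 1 - s) * hypergeomTerm b c i j s := by
  have hasc : (s : ℚ) * (s + 1).ascFactorial (b + c) = (s + (b + c)) * s.ascFactorial (b + c) :=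
    mod_cast Nat.succ_ascFactorial s (b + c)
  simp only [hypergeomTerm]
  rw [invFactorial_eq_mul_of_add_one_eq (m := i - (s + 1 : ℕ)) (n := i - s) (by push_cast; ring),
    invFactorial_eq_mul_of_add_one_eq (m := c + s - i) (n := c + (s + 1 : ℕ) - i)
      (by push_cast; ring),
    invFactorial_eq_mul_of_add_one_eq (m := j + 1 - (s + 1 : ℕ)) (n := j + 1 - s)
      (by push_cast; ring),
    invFactorial_eq_mul_of_add_one_eq (m := b + s - j) (n := b + (s + 1 : ℕ) - j)
      (by push_cast; ring)]
  set κ : ℚ := b ! * c ! * (i - 1)! * (j - 1)! / ((b + i - 1)! * (c + j)!)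
  push_cast
  linear_combination (((c : ℚ) + s + 1 - i) * ((b : ℚ) + s + 1 - j) * ((i : ℚ) - s) *
    ((j : ℚ) + 1 - s) * κ * invFactorial (i - s) * invFactorial (c + (s + 1) - i) *
    invFactorial (j + 1 - s) * invFactorial (b + (s + 1) - j)) * hasc

lemma factorial_pred_mul_ascFactorial {s : ℕ} (hs : 0 < s) (n : ℕ) :
    ((s - 1)! : ℚ) * s.ascFactorial n = (n + s - 1)! := by
  rw [add_comm n s]
  exact_mod_cast Nat.factorial_mul_ascFactorial' s n hs

lemma Afun_mul_Cfun {b c i j s : ℕ} (hs : 0 < s) (hcj : 0 < c + j) :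
    Afun b c i s * Cfun b c s j =
      ((c : ℚ) + j) * ((j : ℚ) + 1 - s) * hypergeomTerm b c i j s := by
  have hcj_fac : ((c + j : ℕ) : ℚ) * (c + j - 1)! = (c + j)! := by
    exact_mod_cast Nat.mul_factorial_pred (by omega)
  have hcj_ne : (c : ℚ) + j ≠ 0 := by exact_mod_cast hcj.ne'
  rw [Afun_eq_mul_invFactorial, Cfun_eq_mul_invFactorial, hypergeomTerm,
    ← factorial_pred_mul_ascFactorial hs (b + c), ← hcj_fac,
    invFactorial_eq_mul_of_add_one_eq (m := j - s) (n := j + 1 - s) (by ring)]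
  push_cast
  field_simp

lemma Afun_mul_Cfun_succ {b c i j s : ℕ} (hs : 0 < s) (hj : 0 < j) :
    Afun b c i s * Cfun b c s (j + 1) =
      (j : ℚ) * ((b : ℚ) + s - j) * hypergeomTerm b c i j s := by
  have hj_fac : (j : ℚ) * (j - 1)! = j ! := by
    exact_mod_cast Nat.mul_factorial_pred (by omega)
  rw [Afun_eq_mul_invFactorial, Cfun_eq_mul_invFactorial, hypergeomTerm,
    ← factorial_pred_mul_ascFactorial hs (b + c), Nat.add_sub_cancel, ← hj_fac,
    show c + (j + 1) - 1 = c + j by omega, invFactorial_eq_mul_of_add_one_eq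
      (m := b + s - (j + 1 : ℕ)) (n := b + s - j) (by push_cast; ring)]
  push_cast
  field_simp

noncomputable def antidiff (b c i j s : ℕ) : ℚ :=
  (1 - s) * ((s : ℚ) + c - i) * ((s : ℚ) + b - j) * hypergeomTerm b c i j s

lemma summand_eq_antidiff_sub {b c i j s : ℕ} (hs : 0 < s) (hj : 0 < j) :
    ((c : ℚ) - i + j + 1) * (Afun b c i s * Cfun b c s (j + 1)) +
        ((j : ℚ) - i - b) * (Afun b c i s * Cfun b c s j) =
      antidiff b c i j (s + 1) - antidiff b c i j s := by
  rw [Afun_mul_Cfun_succ hs hj, Afun_mul_Cfun hs (by omega), antidiff, antidiff]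
  push_cast
  linear_combination hypergeomTerm_succ b c i j s

theorem statement_2_general (b c : ℕ) (i j : ℕ) (hj : 0 < j) :
    ((c : ℚ) - i + j + 1) *
        (∑ s ∈ Finset.Icc 1 (min i (j + 1)), Afun b c i s * Cfun b c s (j + 1))
      + ((j : ℚ) - i - b) * (∑ s ∈ Finset.Icc 1 (min i j), Afun b c i s * Cfun b c s j)
      = 0 := by
  rw [sum_Icc_min_Afun_mul_Cfun, sum_Icc_min_Afun_mul_Cfun, Finset.mul_sum, Finset.mul_sum,
    ← Finset.sum_add_distrib, Finset.sum_congr rfl fun s hs =>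
      summand_eq_antidiff_sub (Finset.mem_Icc.1 hs).1 hj,
    ← Finset.Ico_add_one_right_eq_Icc, Finset.sum_Ico_sub (f := antidiff b c i j) (by omega),
    antidiff, antidiff, hypergeomTerm_of_lt (by omega)]
  simp

/-- with `T(i,j) = ∑_{s=1}^{min(i,j)} A(b,c,i,s) ⬝ C(b,c,s,j)`,
`(c-i+j+1) T(i,j+1) + (j-i-b) T(i,j) = 0`. -/
theorem statement_2 (b c : ℕ) (hb : 0 < b) (hc : 0 < c) (i j : ℕ) (hi : 0 < i) (hj : 0 < j) :
    ((c : ℚ) - i + j + 1) *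
        (∑ s ∈ Finset.Icc 1 (min i (j + 1)), Afun b c i s * Cfun b c s (j + 1))
      + ((j : ℚ) - i - b) * (∑ s ∈ Finset.Icc 1 (min i j), Afun b c i s * Cfun b c s j)
      = 0 :=
  statement_2_general b c i j hj
end

section
/- Let $a,b,c$ be positive integers and $m,n,m',n'$ arbitrary integers. Define $(a+1)\times(a+1)$ matrices over $\mathbb{Q}$ as follows. $P$ has entries $P_{i,j} = \binom{b+c}{c+j-i}$ for $1\le i,j\le a$; $P_{i,a+1} = \binom{n}{m-i}$ for $1\le i\le a$; $P_{a+1,j} = \binom{n'}{j-m'}$ for $1\le j\le a$; and $P_{a+1,a+1} = \binom{n+n'-b-c}{m-m'-c}$. $L$ has entries $L_{i,j} = A(b,c,i,j)$ for $1\le i,j\le a$; $L_{a+1,j} = B_{b,c,n',m'}(j)$ for $1\le j\le a$; $L_{i,a+1} = 0$ for $1\le i\le a$; and $L_{a+1,a+1} = 1$. $U$ has entries $U_{i,j} = C(b,c,i,j)$ for $1\le i,j\le a$; $U_{i,a+1} = D_{b,c,n,m}(i)$ for $1\le i\le a$; $U_{a+1,j} = 0$ for $1\le j\le a$; and $U_{a+1,a+1}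 = \binom{n+n'-b-c}{m-m'-c} - \sum_{v=1}^{a} B_{b,c,n',m'}(v)\cdot D_{b,c,n,m}(v)$. Then $P = L\cdot U$. -/
open Finset Nat

lemma ibinom_natCast (n k : ℕ) : ibinom n k = n.choose k := by
  unfold ibinom
  split_ifs with h
  · rw [cast_choose ℚ (by omega : k ≤ n), mul_comm]
    simp only [Int.toNat_natCast, show ((n : ℤ) - k).toNat = n - k by omega]
  · rw [choose_eq_zero_of_lt (by omega), cast_zero]

lemma ibinom_of_neg {n k : ℤ} (hk : k < 0) : ibinom n k = 0 := if_neg (by omega)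

lemma ibinom_of_lt {n k : ℤ} (h : n < k) : ibinom n k = 0 := if_neg (by omega)

lemma ibinom_add_one {n : ℤ} (hn : 0 ≤ n) (k : ℤ) :
    ibinom (n + 1) k = ibinom n k + ibinom n (k - 1) := by
  lift n to ℕ using hn
  rcases lt_trichotomy k 0 with hk | rfl | hk
  · rw [ibinom_of_neg hk, ibinom_of_neg hk, ibinom_of_neg (by omega), add_zero]
  · rw [ibinom_of_neg (by omega : (0:ℤ) - 1 < 0), add_zero, ← cast_zero, ← cast_succ,
      ibinom_natCast, ibinom_natCast, choose_zero_right, choose_zero_right]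
  · obtain ⟨k, rfl⟩ : ∃ k' : ℕ, k = k' + 1 := ⟨k.toNat - 1, by omega⟩
    rw [add_sub_cancel_right, ← cast_succ, ← cast_succ, ibinom_natCast,
      ibinom_natCast, ibinom_natCast, choose_succ_succ', cast_add, add_comm]

lemma ascFactorial_eq_factorial_div {k : ℕ} (hk : 1 ≤ k) (b : ℕ) :
    (k.ascFactorial b : ℚ) = (b + k - 1)! / (k - 1)! := by
  rw [eq_div_iff (by positivity), mul_comm, ← cast_mul, factorial_mul_ascFactorial' k b hk,
    add_comm]

lemma ascFactorial_ne_zero {k : ℕ} (hk : 1 ≤ k) (b : ℕ) : (k.ascFactorial b : ℚ) ≠ 0 := by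
  rw [ascFactorial_eq_factorial_div hk]
  positivity

lemma sum_range_neg_one_pow_mul_choose_mul_choose {c : ℕ} (hc : 0 < c) (d : ℕ) :
    ∑ s ∈ range (d + 1), (-1 : ℤ) ^ s * (c - 1 + s).choose s * c.choose (d - s) =
      if d = 0 then 1 else 0 := by
  have vandermonde := Ring.add_choose_eq d (Commute.all (-(c : ℤ)) c)
  rw [neg_add_cancel, Ring.choose_zero_ite,
    sum_antidiagonal_eq_sum_range_succ
      (fun s r => Ring.choose (-(c : ℤ)) s * Ring.choose (c : ℤ) r)] at vandermonde
  rw [vandermonde]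
  refine sum_congr rfl fun s _ => ?_
  rw [Ring.choose_neg, Ring.choose_natCast,
    show (c : ℤ) + s - 1 = ((c - 1 + s : ℕ) : ℤ) by omega, Ring.choose_natCast,
    Int.negOnePow_def, Units.smul_def]
  simp

def negChoose (c k v : ℕ) : ℚ :=
  if v ≤ k then (-1) ^ (k - v) * ((c - 1 + (k - v)).choose (k - v) : ℚ) else 0

lemma sum_Icc_ibinom_mul_negChoose {c a i v : ℕ} (hc : 0 < c) (hv : 1 ≤ v) (hia : i ≤ a) :
    ∑ k ∈ Icc 1 a, ibinom c ((i : ℤ) - k) * negChoose c k v = if i = v then 1 else 0 := by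
  have hsupp : ∀ k ∈ Icc 1 a, k ∉ Icc v i →
      ibinom c ((i : ℤ) - k) * negChoose c k v = 0 := by
    intro k _ hk
    rw [mem_Icc, not_and_or, not_le, not_le] at hk
    rcases hk with hk | hk
    · rw [negChoose, if_neg (by omega), mul_zero]
    · rw [ibinom_of_neg (by omega), zero_mul]
  rw [← sum_subset (Icc_subset_Icc hv hia) hsupp]
  rcases lt_or_ge i v with hiv | hvi
  · rw [Icc_eq_empty_of_lt hiv, sum_empty, if_neg hiv.ne]
  obtain ⟨d, rfl⟩ := exists_add_of_le hvi
  rw [← Ico_add_one_right_eq_Icc, sum_Ico_eq_sum_range, show v + d + 1 - v = d + 1 by omega]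
  have toeplitz :=
    congrArg (Int.cast : ℤ → ℚ) (sum_range_neg_one_pow_mul_choose_mul_choose hc d)
  push_cast at toeplitz
  simp only [Nat.add_eq_left]
  rw [← toeplitz]
  refine sum_congr rfl fun s hs => ?_
  rw [mem_range] at hs
  rw [negChoose, if_pos (by omega),
    show (v + d : ℕ) - ((v + s : ℕ) : ℤ) = ((d - s : ℕ) : ℤ) by omega, ibinom_natCast,
    show v + s - v = s by omega]
  ring

lemma sum_mul_sum_eq_of_sum_mul_eq_ite {R : Type*} [Semiring R] {a i : ℕ} {X Y : ℕ → ℕ → R}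
    (hXY : ∀ v ∈ Icc 1 a, ∑ k ∈ Icc 1 a, X i k * Y k v = if i = v then 1 else 0)
    (hi : i ∈ Icc 1 a) (f : ℕ → R) :
    ∑ k ∈ Icc 1 a, X i k * ∑ v ∈ Icc 1 a, Y k v * f v = f i := by
  simp_rw [mul_sum, ← mul_assoc]
  rw [sum_comm]
  simp_rw [← sum_mul]
  rw [sum_congr rfl fun v hv => by rw [hXY v hv]]
  simp [hi]

lemma Afun_eq (b c i : ℕ) {k : ℕ} (hk : 1 ≤ k) :
    Afun b c i k = k.ascFactorial b / i.ascFactorial b * ibinom c ((i : ℤ) - k) := by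
  unfold Afun
  split_ifs with h
  · rw [show (i : ℤ) - k = ((i - k : ℕ) : ℤ) by omega, ibinom_natCast,
      cast_choose ℚ (by omega),
      ascFactorial_eq_factorial_div hk, ascFactorial_eq_factorial_div (by omega),
      show c - (i - k) = c + k - i by omega]
    field_simp
  · rcases not_and_or.mp h with h | h
    · rw [ibinom_of_neg (by omega), mul_zero]
    · rw [ibinom_of_lt (by omega), mul_zero]

lemma Cfun_eq (b c j : ℕ) {k : ℕ} (hk : 1 ≤ k) :
    Cfun b c k j =
      ibinom b ((j : ℤ) - k) *
        (k.ascFactorial (b + c) / (k.ascFactorial b * j.ascFactorial c)) := by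
  unfold Cfun
  split_ifs with h
  · rw [show (j : ℤ) - k = ((j - k : ℕ) : ℤ) by omega, ibinom_natCast,
      cast_choose ℚ (by omega),
      ascFactorial_eq_factorial_div hk, ascFactorial_eq_factorial_div hk,
      ascFactorial_eq_factorial_div (by omega), show b - (j - k) = b + k - j by omega]
    field_simp
  · rcases not_and_or.mp h with h | h
    · rw [ibinom_of_neg (by omega), zero_mul]
    · rw [ibinom_of_lt (by omega), zero_mul]

def AfunInv (b c k v : ℕ) : ℚ :=
  v.ascFactorial b / k.ascFactorial b * negChoose c k v

def CfunInvT (b c k v : ℕ) : ℚ :=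
  k.ascFactorial b * v.ascFactorial c / k.ascFactorial (b + c) * negChoose b k v

lemma Dfun_eq {b c a : ℕ} (hc : 0 < c) (n m : ℤ) {k : ℕ} (hka : k ≤ a) :
    Dfun b c n m k = ∑ v ∈ Icc 1 a, AfunInv b c k v * ibinom n (m - v) := by
  rw [Dfun, ← sum_subset (Icc_subset_Icc_right hka) fun v hva hv => by
    rw [AfunInv, negChoose, if_neg (by simp only [mem_Icc] at hva hv; omega), mul_zero, zero_mul]]
  refine sum_congr rfl fun v hv => ?_
  rw [mem_Icc] at hv
  rw [AfunInv, negChoose, if_pos hv.2, ascFactorial_eq_factorial_div hv.1,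
    ascFactorial_eq_factorial_div (by omega), cast_choose ℚ (by omega),
    show c - 1 + (k - v) - (k - v) = c - 1 by omega,
    show c - 1 + (k - v) = c + k - v - 1 by omega]
  field_simp

lemma Bfun_eq {b c a : ℕ} (hb : 0 < b) (n' m' : ℤ) {k : ℕ} (hka : k ≤ a) :
    Bfun b c n' m' k = ∑ v ∈ Icc 1 a, CfunInvT b c k v * ibinom n' (v - m') := by
  rw [Bfun, ← sum_subset (Icc_subset_Icc_right hka) fun v hva hv => by
    rw [CfunInvT, negChoose, if_neg (by simp only [mem_Icc] at hva hv; omega), mul_zero, zero_mul]]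
  refine sum_congr rfl fun v hv => ?_
  rw [mem_Icc] at hv
  rw [CfunInvT, negChoose, if_pos hv.2, ascFactorial_eq_factorial_div hv.1,
    ascFactorial_eq_factorial_div (by omega), ascFactorial_eq_factorial_div (by omega),
    cast_choose ℚ (by omega),
    show b - 1 + (k - v) - (k - v) = b - 1 by omega, show b - 1 + (k - v) = b + k - v - 1 by omega]
  field_simp

lemma sum_Afun_mul_AfunInv {a b c i v : ℕ} (hc : 0 < c) (hia : i ≤ a) (hv : 1 ≤ v) :
    ∑ k ∈ Icc 1 a, Afun b c i k * AfunInv b c k v = if i = v then 1 else 0 := by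
  have hterm : ∀ k ∈ Icc 1 a, Afun b c i k * AfunInv b c k v =
      v.ascFactorial b / i.ascFactorial b * (ibinom c ((i : ℤ) - k) * negChoose c k v) := by
    intro k hk
    have := ascFactorial_ne_zero (mem_Icc.1 hk).1 b
    rw [Afun_eq b c i (mem_Icc.1 hk).1, AfunInv]
    field_simp
  rw [sum_congr rfl hterm, ← mul_sum, sum_Icc_ibinom_mul_negChoose hc hv hia]
  split_ifs with h
  · subst h
    have := ascFactorial_ne_zero hv b
    field_simp
  · rw [mul_zero]

lemma sum_Cfun_mul_CfunInvT {a b c j v : ℕ} (hb : 0 < b) (hja : j ≤ a) (hv : 1 ≤ v) :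
    ∑ k ∈ Icc 1 a, Cfun b c k j * CfunInvT b c k v = if j = v then 1 else 0 := by
  have hterm : ∀ k ∈ Icc 1 a, Cfun b c k j * CfunInvT b c k v =
      v.ascFactorial c / j.ascFactorial c * (ibinom b ((j : ℤ) - k) * negChoose b k v) := by
    intro k hk
    have := ascFactorial_ne_zero (mem_Icc.1 hk).1 b
    have := ascFactorial_ne_zero (mem_Icc.1 hk).1 (b + c)
    rw [Cfun_eq b c j (mem_Icc.1 hk).1, CfunInvT]
    field_simp
  rw [sum_congr rfl hterm, ← mul_sum, sum_Icc_ibinom_mul_negChoose hb hv hja]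
  split_ifs with h
  · subst h
    have := ascFactorial_ne_zero hv c
    field_simp
  · rw [mul_zero]

lemma sum_Afun_mul_Dfun {a b c i : ℕ} (hc : 0 < c) (n m : ℤ) (hi : 1 ≤ i) (hia : i ≤ a) :
    ∑ k ∈ Icc 1 a, Afun b c i k * Dfun b c n m k = ibinom n (m - i) := by
  rw [sum_congr rfl fun k hk => by rw [Dfun_eq hc n m (mem_Icc.1 hk).2]]
  exact sum_mul_sum_eq_of_sum_mul_eq_ite
    (fun v hv => sum_Afun_mul_AfunInv hc hia (mem_Icc.1 hv).1) (mem_Icc.2 ⟨hi, hia⟩) _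

lemma sum_Bfun_mul_Cfun {a b c j : ℕ} (hb : 0 < b) (n' m' : ℤ) (hj : 1 ≤ j) (hja : j ≤ a) :
    ∑ k ∈ Icc 1 a, Bfun b c n' m' k * Cfun b c k j = ibinom n' (j - m') := by
  rw [sum_congr rfl fun k hk => by rw [Bfun_eq hb n' m' (mem_Icc.1 hk).2, mul_comm]]
  exact sum_mul_sum_eq_of_sum_mul_eq_ite (X := fun j k => Cfun b c k j)
    (fun v hv => sum_Cfun_mul_CfunInvT hb hja (mem_Icc.1 hv).1) (mem_Icc.2 ⟨hj, hja⟩)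
    (fun v => ibinom n' (v - m'))

noncomputable def tripleSum (b c N : ℕ) (p q : ℤ) : ℚ :=
  ∑ t ∈ range N, ibinom (b + c + t) t * ibinom c (p - t) * ibinom b (q - t)

lemma tripleSum_succ (b c N : ℕ) (p q : ℤ) :
    tripleSum (b + 1) c (N + 1) p q =
      tripleSum b c (N + 1) p q + tripleSum b c (N + 1) p (q - 1) +
        tripleSum (b + 1) c N (p - 1) (q - 1) := by
  have pascal : ∀ t : ℕ,
      ibinom ((b + 1 : ℕ) + c + t) t * ibinom c (p - t) * ibinom (b + 1 : ℕ) (q - t) =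
        ibinom (b + c + t) t * ibinom c (p - t) * ibinom b (q - t) +
          ibinom (b + c + t) t * ibinom c (p - t) * ibinom b (q - 1 - t) +
          ibinom (b + c + t) (t - 1) * ibinom c (p - t) * ibinom (b + 1 : ℕ) (q - t) := by
    intro t
    rw [show ((b + 1 : ℕ) : ℤ) + c + t = (b + c + t) + 1 by push_cast; ring,
      ibinom_add_one (by positivity), show ((b + 1 : ℕ) : ℤ) = b + 1 by push_cast; ring,
      ibinom_add_one (by positivity) (q - t), show q - t - 1 = q - 1 - t by ring]
    ring
  simp only [tripleSum, sum_congr rfl fun t _ => pascal t, sum_add_distrib]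
  congr 1
  rw [sum_range_succ' _ N, ibinom_of_neg (by simp : ((0 : ℕ) : ℤ) - 1 < 0), zero_mul, zero_mul,
    add_zero]
  refine sum_congr rfl fun t _ => ?_
  congr 2 <;> push_cast <;> ring_nf

lemma tripleSum_zero (c N : ℕ) {p : ℤ} (hp : p < N) (q : ℤ) :
    tripleSum 0 c N p q = ibinom p q * ibinom (c + q) p := by
  simp only [tripleSum, cast_zero, zero_add]
  rcases lt_or_ge q 0 with hq | hq
  · rw [ibinom_of_neg hq, zero_mul]
    exact sum_eq_zero fun t _ => by rw [ibinom_of_neg (k := q - t) (by omega), mul_zero]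
  lift q to ℕ using hq
  rw [sum_eq_single q (fun t _ ht => by
      rcases lt_or_gt_of_ne ht with ht | ht
      · rw [ibinom_of_lt (k := q - t) (by omega), mul_zero]
      · rw [ibinom_of_neg (k := q - t) (by omega), mul_zero])
    (fun hq => by
      rw [mem_range] at hq
      rw [ibinom_of_neg (k := p - q) (by omega), mul_zero, zero_mul]),
    sub_self, ← cast_zero, ibinom_natCast, choose_self, cast_one, mul_one]
  rcases lt_or_ge p q with hpq | hqp
  · rw [ibinom_of_neg (k := p - q) (by omega), ibinom_of_lt hpq]
    ring
  lift p to ℕ using (by omega)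
  rw [show (c : ℤ) + q = ((c + q : ℕ) : ℤ) by push_cast; ring,
    show (p : ℤ) - q = ((p - q : ℕ) : ℤ) by omega]
  simp only [ibinom_natCast]
  have trinomial := choose_mul (n := c + q) (show q ≤ p by omega)
  rw [add_tsub_cancel_right] at trinomial
  exact_mod_cast trinomial.symm.trans (mul_comm _ _)

theorem tripleSum_eq (b c N : ℕ) {p : ℤ} (hp : p < N) (q : ℤ) :
    tripleSum b c N p q = ibinom (b + p) q * ibinom (c + q) p := by
  induction N generalizing b p q with
  | zero => rw [tripleSum, sum_range_zero, ibinom_of_neg (by omega : p < 0), mul_zero]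
  | succ N ihN =>
    induction b generalizing p q with
    | zero => simpa using tripleSum_zero c (N + 1) hp q
    | succ b ihb =>
      rw [tripleSum_succ, ihb hp, ihb hp, ihN (b + 1) (by omega)]
      rcases lt_or_ge p 0 with hp0 | hp0
      · simp only [ibinom_of_neg hp0, ibinom_of_neg (by omega : p - 1 < 0)]
        ring
      rw [show ((b + 1 : ℕ) : ℤ) + p = (b + p) + 1 by push_cast; ring,
        ibinom_add_one (by positivity) q,
        show ((b + 1 : ℕ) : ℤ) + (p - 1) = b + p by push_cast; ring]
      rcases le_or_gt q 0 with hq | hq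
      · simp only [ibinom_of_neg (by omega : q - 1 < 0)]
        ring
      rw [show (c : ℤ) + q = (c + (q - 1)) + 1 by ring, ibinom_add_one (by omega) p]
      ring

lemma factorial_div_mul_ibinom_mul_ibinom {b c i j : ℕ} (hi : 1 ≤ i) (hj : 1 ≤ j) :
    (b + c)! / (i.ascFactorial b * j.ascFactorial c) *
        (ibinom (b + ((i : ℤ) - 1)) ((j : ℤ) - 1) *
          ibinom (c + ((j : ℤ) - 1)) ((i : ℤ) - 1)) =
      ibinom (b + c) (c + j - i) := by
  rcases lt_or_ge (b + i) j with hbij | hjbi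
  · rw [ibinom_of_lt (k := (j : ℤ) - 1) (by omega),
      ibinom_of_lt (k := (c : ℤ) + j - i) (by omega)]
    ring
  rcases lt_or_ge (c + j) i with hcji | hicj
  · rw [ibinom_of_lt (k := (i : ℤ) - 1) (by omega),
      ibinom_of_neg (k := (c : ℤ) + j - i) (by omega)]
    ring
  rw [show (b : ℤ) + ((i : ℤ) - 1) = ((b + i - 1 : ℕ) : ℤ) by omega,
    show (c : ℤ) + ((j : ℤ) - 1) = ((c + j - 1 : ℕ) : ℤ) by omega,
    show (j : ℤ) - 1 = ((j - 1 : ℕ) : ℤ) by omega,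
    show (i : ℤ) - 1 = ((i - 1 : ℕ) : ℤ) by omega,
    show (b : ℤ) + c = ((b + c : ℕ) : ℤ) by push_cast; ring,
    show (c : ℤ) + j - i = ((c + j - i : ℕ) : ℤ) by omega]
  simp only [ibinom_natCast]
  rw [cast_choose ℚ (by omega : j - 1 ≤ b + i - 1),
    cast_choose ℚ (by omega : i - 1 ≤ c + j - 1),
    cast_choose ℚ (by omega : c + j - i ≤ b + c), ascFactorial_eq_factorial_div hi,
    ascFactorial_eq_factorial_div hj, show b + i - 1 - (j - 1) = b + i - j by omega,
    show c + j - 1 - (i - 1) = c + j - i by omega, show b + c - (c + j - i) = b + i - j by omega]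
  field_simp

lemma sum_Afun_mul_Cfun {a b c i j : ℕ} (hi : 1 ≤ i) (hia : i ≤ a) (hj : 1 ≤ j) :
    ∑ k ∈ Icc 1 a, Afun b c i k * Cfun b c k j = ibinom (b + c) (c + j - i) := by
  have hsupp : ∀ k ∈ Icc 1 a, k ∉ Icc 1 i → Afun b c i k * Cfun b c k j = 0 := by
    intro k hk hki
    rw [mem_Icc] at hk hki
    rw [Afun_eq b c i hk.1, ibinom_of_neg (k := (i : ℤ) - k) (by omega), mul_zero, zero_mul]
  have hterm : ∀ t ∈ range i, Afun b c i (1 + t) * Cfun b c (1 + t) j =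
      (b + c)! / (i.ascFactorial b * j.ascFactorial c) *
        (ibinom (b + c + t) t * ibinom c ((i : ℤ) - 1 - t) * ibinom b ((j : ℤ) - 1 - t)) := by
    intro t _
    have := ascFactorial_ne_zero (by omega : 1 ≤ 1 + t) b
    rw [Afun_eq b c i (by omega), Cfun_eq b c j (by omega), add_comm 1 t,
      ascFactorial_eq_factorial_mul_choose t (b + c), ← choose_symm_add (a := t),
      show (b : ℤ) + c + t = ((b + c + t : ℕ) : ℤ) by push_cast; ring, ibinom_natCast,
      show (i : ℤ) - 1 - t = i - ((t + 1 : ℕ) : ℤ) by push_cast; ring,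
      show (j : ℤ) - 1 - t = j - ((t + 1 : ℕ) : ℤ) by push_cast; ring, add_comm t (b + c),
      cast_mul]
    field_simp
  rw [← sum_subset (Icc_subset_Icc_right hia) hsupp, ← Ico_add_one_right_eq_Icc,
    sum_Ico_eq_sum_range, add_tsub_cancel_right, sum_congr rfl hterm, ← mul_sum]
  rw [← tripleSum, tripleSum_eq b c i (by omega)]
  exact factorial_div_mul_ibinom_mul_ibinom hi hj

lemma sum_fin_eq_sum_Icc {M : Type*} [AddCommMonoid M] (a : ℕ) (f : ℕ → M) :
    ∑ k : Fin a, f (k + 1) = ∑ k ∈ Icc 1 a, f k := by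
  rw [Fin.sum_univ_eq_sum_range (fun k => f (k + 1)), ← Ico_add_one_right_eq_Icc,
    sum_Ico_eq_sum_range, add_tsub_cancel_right]
  simp only [add_comm]

-- Indices of `Fin (a + 1)` are 0-based: the paper's index is `↑i + 1`.
theorem statement_5_general (a b c : ℕ) (hb : 0 < b) (hc : 0 < c) (m n m' n' : ℤ) :
    (Matrix.of fun i j : Fin (a + 1) =>
      if (i : ℕ) < a then
        if (j : ℕ) < a then ibinom ((b : ℤ) + c) ((c : ℤ) + ((j : ℕ) + 1) - ((i : ℕ) + 1))
        else ibinom n (m - ((i : ℕ) + 1))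
      else
        if (j : ℕ) < a then ibinom n' ((((j : ℕ) : ℤ) + 1) - m')
        else ibinom (n + n' - b - c) (m - m' - c))
    =
    (Matrix.of fun i j : Fin (a + 1) =>
      if (i : ℕ) < a then
        if (j : ℕ) < a then Afun b c ((i : ℕ) + 1) ((j : ℕ) + 1) else 0
      else
        if (j : ℕ) < a then Bfun b c n' m' ((j : ℕ) + 1) else 1)
    *
    (Matrix.of fun i j : Fin (a + 1) =>
      if (i : ℕ) < a then
        if (j : ℕ) < a then Cfun b c ((i : ℕ) + 1) ((j : ℕ) + 1)
        else Dfun b c n m ((i : ℕ) + 1)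
      else
        if (j : ℕ) < a then 0
        else ibinom (n + n' - b - c) (m - m' - c)
          - ∑ v ∈ Finset.Icc 1 a, Bfun b c n' m' v * Dfun b c n m v) := by
  ext i j
  rw [Matrix.mul_apply, Fin.sum_univ_castSucc]
  simp only [Matrix.of_apply, Fin.val_castSucc, Fin.is_lt, if_true, Fin.val_last,
    lt_self_iff_false, if_false]
  by_cases hi : (i : ℕ) < a <;> by_cases hj : (j : ℕ) < a <;>
    simp only [hi, hj, if_true, if_false, mul_zero, zero_mul, one_mul, add_zero]
  · rw [sum_fin_eq_sum_Icc a fun k => Afun b c (i + 1) k * Cfun b c k (j + 1),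
      sum_Afun_mul_Cfun (by omega) hi (by omega)]
    push_cast
    ring_nf
  · rw [sum_fin_eq_sum_Icc a fun k => Afun b c (i + 1) k * Dfun b c n m k,
      sum_Afun_mul_Dfun hc n m (by omega) hi]
    push_cast
    ring_nf
  · rw [sum_fin_eq_sum_Icc a fun k => Bfun b c n' m' k * Cfun b c k (j + 1),
      sum_Bfun_mul_Cfun hb n' m' (by omega) hj]
    push_cast
    ring_nf
  · rw [sum_fin_eq_sum_Icc a fun k => Bfun b c n' m' k * Dfun b c n m k]
    ring

/-- the LU-decomposition `P = L ⬝ U` of the lattice path matrix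
(indices of `Fin (a+1)` are 0-based, so the 1-based index is `↑i + 1`). -/
theorem statement_5 (a b c : ℕ) (ha : 0 < a) (hb : 0 < b) (hc : 0 < c) (m n m' n' : ℤ) :
    (Matrix.of fun i j : Fin (a + 1) =>
      if (i : ℕ) < a then
        if (j : ℕ) < a then ibinom ((b : ℤ) + c) ((c : ℤ) + ((j : ℕ) + 1) - ((i : ℕ) + 1))
        else ibinom n (m - ((i : ℕ) + 1))
      else
        if (j : ℕ) < a then ibinom n' ((((j : ℕ) : ℤ) + 1) - m')
        else ibinom (n + n' - b - c) (m - m' - c))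
    =
    (Matrix.of fun i j : Fin (a + 1) =>
      if (i : ℕ) < a then
        if (j : ℕ) < a then Afun b c ((i : ℕ) + 1) ((j : ℕ) + 1) else 0
      else
        if (j : ℕ) < a then Bfun b c n' m' ((j : ℕ) + 1) else 1)
    *
    (Matrix.of fun i j : Fin (a + 1) =>
      if (i : ℕ) < a then
        if (j : ℕ) < a then Cfun b c ((i : ℕ) + 1) ((j : ℕ) + 1)
        else Dfun b c n m ((i : ℕ) + 1)
      else
        if (j : ℕ) < a then 0
        else ibinom (n + n' - b - c) (m - m' - c)
          - ∑ v ∈ Finset.Icc 1 a, Bfun b c n' m' v * Dfun b c n m v) :=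
  statement_5_general a b c hb hc m n m' n'
end
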